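/- Let X be a finite set with weight m, H a selfadjoint operator on ℓ²(X,m), and R ∈ ℝ. Define F(x) := H x(x) − Σ_{y≠x} |H y(x)|. Then F(x) ≥ R for all x ∈ X if and only if ‖e^{-tH} f‖_∞ ≤ e^{-Rt} ‖f‖_∞ for all t ≥ 0 and all f : X → ℝ. -/

import Mathlib

/-!
Shifting by a scalar `c ≥ max_x A x x` gives `exp (-t A) = e^{-tc} exp (t (c - A))`, and
`‖exp B‖ ≤ e^{‖B‖}`. Since `c - A` has nonnegative diagonal, its `ℓ∞` row sums are
`c - F(x) ≤ c - R` when `F ≥ R`, so the `ℓ∞` operator norm of `exp (-t A)` is at most `e^{-Rt}`.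
Conversely, test the bound on the sign vector `f = 1_x - ∑_{y ≠ x} sign (A x y) 1_y`, for which
`(A f)(x) = F(x)` and `‖f‖_∞ ≤ 1`: the function `t ↦ (exp (-t A) f)(x)` starts at `1` and stays
below `e^{-Rt}` for `t ≥ 0`, so its derivative `-F(x)` at `0` is at most `-R`.
-/

open Finset

namespace NormedSpace

variable {𝔸 : Type*} [NormedRing 𝔸] [NormedAlgebra ℝ 𝔸]

theorem norm_exp_le_exp_norm [NormOneClass 𝔸] (a : 𝔸) : ‖exp a‖ ≤ Real.exp ‖a‖ := by
  rw [exp_eq_tsum ℝ, Real.exp_eq_exp_ℝ, exp_eq_tsum_div]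
  refine (norm_tsum_le_tsum_norm (norm_expSeries_summable' a)).trans <|
    (norm_expSeries_summable' a).tsum_le_tsum (fun n => ?_) (Real.summable_pow_div_factorial ‖a‖)
  rw [norm_smul, norm_inv, Real.norm_natCast, div_eq_inv_mul]
  gcongr
  exact norm_pow_le a n

variable [CompleteSpace 𝔸]

theorem exp_algebraMap_add (c : ℝ) (a : 𝔸) :
    exp (algebraMap ℝ 𝔸 c + a) = Real.exp c • exp a := by
  have hball (b : 𝔸) : b ∈ Metric.eball (0 : 𝔸) (expSeries ℝ 𝔸).radius :=
    (expSeries_radius_eq_top ℝ 𝔸).symm ▸ edist_lt_top _ _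
  rw [exp_add_of_commute_of_mem_ball (Algebra.commutes c a) (hball _) (hball _),
    ← algebraMap_exp_comm, ← Real.exp_eq_exp_ℝ, Algebra.smul_def]

theorem norm_exp_le_exp_norm_algebraMap_add_sub [NormOneClass 𝔸] (c : ℝ) (a : 𝔸) :
    ‖exp a‖ ≤ Real.exp (‖algebraMap ℝ 𝔸 c + a‖ - c) := by
  have h := norm_exp_le_exp_norm (algebraMap ℝ 𝔸 c + a)
  rw [exp_algebraMap_add, norm_smul, Real.norm_of_nonneg (Real.exp_pos c).le] at h
  rw [Real.exp_sub, le_div_iff₀ (Real.exp_pos c), mul_comm]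
  exact h

end NormedSpace

theorem HasDerivAt.le_of_le_on_Ici {φ ψ : ℝ → ℝ} {a φ' ψ' : ℝ} (hφ : HasDerivAt φ φ' a)
    (hψ : HasDerivAt ψ ψ' a) (heq : φ a = ψ a) (hle : ∀ t, a ≤ t → φ t ≤ ψ t) : φ' ≤ ψ' := by
  have hmax : IsLocalMaxOn (φ - ψ) (Set.Ici a) a :=
    IsMaxOn.localize fun t ht => by simpa [heq] using hle t ht
  have h1 : (1 : ℝ) ∈ posTangentConeAt (Set.Ici a) a :=
    mem_posTangentConeAt_of_segment_subset (by simp [Set.Icc_subset_Ici_self])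
  simpa using hmax.hasFDerivWithinAt_nonpos (hφ.sub hψ).hasDerivWithinAt.hasFDerivWithinAt h1

namespace Matrix

open NormedSpace
open scoped Norms.Operator

theorem linfty_opNorm_le_of_row_sum_le {m n α : Type*} [Fintype m] [Fintype n]
    [SeminormedAddCommGroup α] {A : Matrix m n α} {c : ℝ} (hc : 0 ≤ c)
    (h : ∀ i, ∑ j, ‖A i j‖ ≤ c) : ‖A‖ ≤ c := by
  rw [linfty_opNorm_def, ← NNReal.coe_mk c hc, NNReal.coe_le_coe, Finset.sup_le_iff]
  intro i _
  rw [← NNReal.coe_le_coe]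
  simpa using h i

variable {X : Type*} [Fintype X] [DecidableEq X]

def formanCurvature (A : Matrix X X ℝ) (x : X) : ℝ :=
  A x x - ∑ y ∈ univ.erase x, |A x y|

theorem linfty_opNorm_algebraMap_sub_le [Nonempty X] {A : Matrix X X ℝ} {c r : ℝ}
    (hc : ∀ x, A x x ≤ c) (hr : ∀ x, r ≤ A.formanCurvature x) :
    ‖algebraMap ℝ (Matrix X X ℝ) c - A‖ ≤ c - r := by
  have hrow (x : X) : ∑ y, |(algebraMap ℝ (Matrix X X ℝ) c - A) x y|
      = (c - A x x) + ∑ y ∈ univ.erase x, |A x y| := by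
    rw [← add_sum_erase _ _ (mem_univ x)]
    congr 1
    · simp [algebraMap_matrix_apply, abs_of_nonneg, hc x]
    · refine sum_congr rfl fun y hy => ?_
      simp [algebraMap_matrix_apply, Ne.symm (ne_of_mem_erase hy)]
  have hbound (x : X) : ∑ y, |(algebraMap ℝ (Matrix X X ℝ) c - A) x y| ≤ c - r := by
    unfold formanCurvature at hr
    linarith [hrow x, hr x]
  obtain ⟨x⟩ := ‹Nonempty X›
  exact linfty_opNorm_le_of_row_sum_le ((sum_nonneg fun _ _ => abs_nonneg _).trans (hbound x))
    (by simpa only [Real.norm_eq_abs] using hbound)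

theorem linfty_opNorm_exp_neg_smul_le [Nonempty X] {A : Matrix X X ℝ} {r : ℝ}
    (hr : ∀ x, r ≤ A.formanCurvature x) {t : ℝ} (ht : 0 ≤ t) :
    ‖exp (-(t • A))‖ ≤ Real.exp (-r * t) := by
  obtain ⟨c, hc⟩ := Finite.exists_le fun x => A x x
  have hshift : algebraMap ℝ (Matrix X X ℝ) (t * c) + -(t • A)
      = t • (algebraMap ℝ (Matrix X X ℝ) c - A) := by
    rw [Algebra.algebraMap_eq_smul_one, Algebra.algebraMap_eq_smul_one, smul_sub, smul_smul,
      sub_eq_add_neg]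
  calc ‖exp (-(t • A))‖
      ≤ Real.exp (‖algebraMap ℝ (Matrix X X ℝ) (t * c) + -(t • A)‖ - t * c) :=
        norm_exp_le_exp_norm_algebraMap_add_sub _ _
    _ ≤ Real.exp (t * (c - r) - t * c) := by
        rw [hshift, norm_smul, Real.norm_of_nonneg ht]
        gcongr
        exact linfty_opNorm_algebraMap_sub_le hc hr
    _ = Real.exp (-r * t) := by ring_nf

theorem norm_exp_neg_smul_mulVec_le [Nonempty X] {A : Matrix X X ℝ} {r : ℝ}
    (hr : ∀ x, r ≤ A.formanCurvature x) {t : ℝ} (ht : 0 ≤ t) (f : X → ℝ) :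
    ‖exp (-(t • A)) *ᵥ f‖ ≤ Real.exp (-r * t) * ‖f‖ :=
  (linfty_opNorm_mulVec _ f).trans <| by gcongr; exact linfty_opNorm_exp_neg_smul_le hr ht

noncomputable def formanTestVector (A : Matrix X X ℝ) (x : X) : X → ℝ :=
  fun y => if y = x then 1 else -SignType.sign (A x y)

theorem norm_formanTestVector_le (A : Matrix X X ℝ) (x : X) : ‖A.formanTestVector x‖ ≤ 1 := by
  refine (pi_norm_le_iff_of_nonneg zero_le_one).2 fun y => ?_
  unfold formanTestVector
  split_ifs
  · simp
  · rcases SignType.sign (A x y) with _ | _ | _ <;> simp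

theorem mulVec_formanTestVector (A : Matrix X X ℝ) (x : X) :
    (A *ᵥ A.formanTestVector x) x = A.formanCurvature x := by
  rw [mulVec, dotProduct, ← add_sum_erase _ _ (mem_univ x), formanCurvature, sub_eq_add_neg,
    ← sum_neg_distrib]
  congr 1
  · simp [formanTestVector]
  · refine sum_congr rfl fun y hy => ?_
    simp [formanTestVector, ne_of_mem_erase hy, self_mul_sign]

theorem hasDerivAt_exp_neg_smul_mulVec (A : Matrix X X ℝ) (f : X → ℝ) :
    HasDerivAt (fun t : ℝ => exp (-(t • A)) *ᵥ f) (-(A *ᵥ f)) 0 := by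
  have hexp := hasDerivAt_exp_smul_const (-A) (0 : ℝ)
  simp only [smul_neg, zero_smul, neg_zero, exp_zero, one_mul] at hexp
  rw [← neg_mulVec]
  exact (LinearMap.toContinuousLinearMap ((mulVecBilin ℝ ℝ).flip f)).hasFDerivAt.comp_hasDerivAt 0
    hexp

theorem le_formanCurvature_of_norm_exp_neg_smul_mulVec_le {A : Matrix X X ℝ} {r : ℝ}
    (h : ∀ t : ℝ, 0 ≤ t → ∀ f : X → ℝ, ‖exp (-(t • A)) *ᵥ f‖ ≤ Real.exp (-r * t) * ‖f‖)
    (x : X) : r ≤ A.formanCurvature x := by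
  set f := A.formanTestVector x
  have hentry : HasDerivAt (fun t : ℝ => (exp (-(t • A)) *ᵥ f) x) (-A.formanCurvature x) 0 := by
    rw [← mulVec_formanTestVector]
    exact hasDerivAt_pi.1 (hasDerivAt_exp_neg_smul_mulVec A f) x
  have hexp : HasDerivAt (fun t : ℝ => Real.exp (-r * t)) (-r) 0 := by
    simpa using ((hasDerivAt_id (0 : ℝ)).const_mul (-r)).exp
  have hle (t : ℝ) (ht : 0 ≤ t) : (exp (-(t • A)) *ᵥ f) x ≤ Real.exp (-r * t) :=
    calc (exp (-(t • A)) *ᵥ f) x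
        ≤ ‖exp (-(t • A)) *ᵥ f‖ := (Real.le_norm_self _).trans (norm_le_pi_norm _ x)
      _ ≤ Real.exp (-r * t) * ‖f‖ := h t ht f
      _ ≤ Real.exp (-r * t) := mul_le_of_le_one_right (Real.exp_pos _).le
          (norm_formanTestVector_le A x)
  have h0 : (exp (-((0 : ℝ) • A)) *ᵥ f) x = Real.exp (-r * 0) := by
    simp [f, formanTestVector]
  linarith [hentry.le_of_le_on_Ici hexp h0 hle]

end Matrix

theorem stmt_6_general {X : Type*} [Fintype X] [DecidableEq X] [Nonempty X]
    (H : Matrix X X ℝ)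
    (R : ℝ) :
    (∀ x, R ≤ H x x - ∑ y ∈ Finset.univ.erase x, |H x y|) ↔
      (∀ t : ℝ, 0 ≤ t → ∀ f : X → ℝ,
        ‖(NormedSpace.exp (-(t • H))).mulVec f‖ ≤ Real.exp (-R * t) * ‖f‖) :=
  ⟨fun hF _ ht => Matrix.norm_exp_neg_smul_mulVec_le hF ht,
    Matrix.le_formanCurvature_of_norm_exp_neg_smul_mulVec_le⟩

/-- For a selfadjoint `H` on `ℓ²(X,m)` with Forman curvature
`F(x) = H x x − ∑_{y≠x} |H y x|`, one has `F ≥ R` iff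
`‖e^{-tH} f‖_∞ ≤ e^{-Rt} ‖f‖_∞` for all `t ≥ 0` and all `f`. -/
theorem stmt_6 {X : Type*} [Fintype X] [DecidableEq X] [Nonempty X]
    (m : X → ℝ) (hm : ∀ x, 0 < m x)
    (H : Matrix X X ℝ)
    (hsa : ∀ x y, m x * H x y = m y * H y x)
    (R : ℝ) :
    (∀ x, R ≤ H x x - ∑ y ∈ Finset.univ.erase x, |H x y|) ↔
      (∀ t : ℝ, 0 ≤ t → ∀ f : X → ℝ,
        ‖(NormedSpace.exp (-(t • H))).mulVec f‖ ≤ Real.exp (-R * t) * ‖f‖) :=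
  stmt_6_general H R
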